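/- arXiv:2004.01293 — 2 statements merged into one kernel-verified Lean document; each statement's English description precedes it below -/
import Mathlib

section
/- Let G be a weighted directed graph on vertex set V = {1,…,n} and let M_1 be the simple cyclic-triangle motif with vertices {1,2,3} and edge set E_M = {(1,2),(2,3),(3,1)}. Then the functional motif adjacency matrix of M_1 in G satisfies M^func = (1/3)·(C + Cᵀ), where C = Jᵀ ∘ (J G) + Jᵀ ∘ (G J) + Gᵀ ∘ (J J). -/
open scoped Classical BigOperators Matrix

noncomputable section

/-- A motif on `m` vertices: a weakly connected loopless directed graph on the vertex set
`Fin m`, given by its edge set. -/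
structure Motif (m : ℕ) where
  edges : Finset (Fin m × Fin m)
  irrefl : ∀ e ∈ edges, e.1 ≠ e.2
  connected : (SimpleGraph.fromRel (fun u v => (u, v) ∈ edges)).Connected

variable {n m : ℕ}

/-- Edge set of the weighted directed graph with weight matrix `G`:
`E = {(i,j) : i ≠ j and G i j > 0}`. -/
def edgeFinset (G : Matrix (Fin n) (Fin n) ℝ) : Finset (Fin n × Fin n) :=
  Finset.univ.filter fun p => p.1 ≠ p.2 ∧ 0 < G p.1 p.2

/-- Directed-edge indicator matrix `J`. -/
def Jmat (G : Matrix (Fin n) (Fin n) ℝ) : Matrix (Fin n) (Fin n) ℝ :=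
  fun i j => if (i, j) ∈ edgeFinset G then 1 else 0

/-- Single-edge indicator matrix `J_s`. -/
def Jsmat (G : Matrix (Fin n) (Fin n) ℝ) : Matrix (Fin n) (Fin n) ℝ :=
  fun i j => if (i, j) ∈ edgeFinset G ∧ (j, i) ∉ edgeFinset G then 1 else 0

/-- Double-edge indicator matrix `J_d`. -/
def Jdmat (G : Matrix (Fin n) (Fin n) ℝ) : Matrix (Fin n) (Fin n) ℝ :=
  fun i j => if (i, j) ∈ edgeFinset G ∧ (j, i) ∈ edgeFinset G then 1 else 0

/-- Missing-edge indicator matrix `J_0`. -/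
def J0mat (G : Matrix (Fin n) (Fin n) ℝ) : Matrix (Fin n) (Fin n) ℝ :=
  fun i j => if (i, j) ∉ edgeFinset G ∧ (j, i) ∉ edgeFinset G ∧ i ≠ j then 1 else 0

/-- Vertex-distinct indicator matrix `J_n`. -/
def Jnmat (n : ℕ) : Matrix (Fin n) (Fin n) ℝ :=
  fun i j => if i ≠ j then 1 else 0

/-- Single-edge weighted matrix `G_s`. -/
def Gsmat (G : Matrix (Fin n) (Fin n) ℝ) : Matrix (Fin n) (Fin n) ℝ :=
  fun i j => if (i, j) ∈ edgeFinset G ∧ (j, i) ∉ edgeFinset G then G i j else 0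

/-- Double-edge weighted matrix `G_d`. -/
def Gdmat (G : Matrix (Fin n) (Fin n) ℝ) : Matrix (Fin n) (Fin n) ℝ :=
  fun i j => if (i, j) ∈ edgeFinset G ∧ (j, i) ∈ edgeFinset G then G i j + G j i else 0

/-- Entrywise (Hadamard) product of matrices. -/
def had (A B : Matrix (Fin n) (Fin n) ℝ) : Matrix (Fin n) (Fin n) ℝ :=
  fun i j => A i j * B i j

/-- Well-formedness of a candidate subgraph `H = (V_H, E_H)` of a graph on `Fin n`:
each edge joins two distinct vertices of `H`. -/
def IsGraphPair (H : Finset (Fin n) × Finset (Fin n × Fin n)) : Prop :=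
  ∀ e ∈ H.2, e.1 ∈ H.1 ∧ e.2 ∈ H.1 ∧ e.1 ≠ e.2

/-- `φ` is an isomorphism from the motif `M` onto the graph `H = (V_H, E_H)`. -/
def IsIso (M : Motif m) (H : Finset (Fin n) × Finset (Fin n × Fin n))
    (φ : Fin m → Fin n) : Prop :=
  Function.Injective φ ∧ Finset.image φ Finset.univ = H.1 ∧
    ∀ u v : Fin m, (u, v) ∈ M.edges ↔ (φ u, φ v) ∈ H.2

/-- `H` is a functional instance of motif `M` in the graph with weight matrix `G`,
i.e. `M ≅ H ≤ G`. -/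
def IsFuncInstance (M : Motif m) (G : Matrix (Fin n) (Fin n) ℝ)
    (H : Finset (Fin n) × Finset (Fin n × Fin n)) : Prop :=
  IsGraphPair H ∧ H.2 ⊆ edgeFinset G ∧ ∃ φ, IsIso M H φ

/-- `H` is a structural instance of motif `M` in the graph with weight matrix `G`,
i.e. `M ≅ H < G` (`H` an induced subgraph: `E_H = E ∩ (V_H × V_H)`). -/
def IsStrucInstance (M : Motif m) (G : Matrix (Fin n) (Fin n) ℝ)
    (H : Finset (Fin n) × Finset (Fin n × Fin n)) : Prop :=
  IsGraphPair H ∧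
    H.2 = (edgeFinset G).filter (fun e => e.1 ∈ H.1 ∧ e.2 ∈ H.1) ∧
    ∃ φ, IsIso M H φ

/-- `{i, j}` is an anchored pair of the instance `H`: there is an isomorphism `φ` from
`M` to `H` and distinct anchors `a, b ∈ A` with `φ a = i` and `φ b = j`. -/
def AnchoredPair (M : Motif m) (A : Finset (Fin m))
    (H : Finset (Fin n) × Finset (Fin n × Fin n)) (i j : Fin n) : Prop :=
  ∃ φ, IsIso M H φ ∧ ∃ a ∈ A, ∃ b ∈ A, a ≠ b ∧ φ a = i ∧ φ b = j

/-- The functional motif adjacency matrix of the motif `(M, A)` in the graph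
with weight matrix `G`. -/
def mamFunc (M : Motif m) (A : Finset (Fin m)) (G : Matrix (Fin n) (Fin n) ℝ) :
    Matrix (Fin n) (Fin n) ℝ :=
  fun i j => (1 / (M.edges.card : ℝ)) *
    ∑ H : Finset (Fin n) × Finset (Fin n × Fin n),
      if IsFuncInstance M G H ∧ AnchoredPair M A H i j then ∑ e ∈ H.2, G e.1 e.2 else 0

/-- The structural motif adjacency matrix of the motif `(M, A)` in the graph
with weight matrix `G`. -/
def mamStruc (M : Motif m) (A : Finset (Fin m)) (G : Matrix (Fin n) (Fin n) ℝ) :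
    Matrix (Fin n) (Fin n) ℝ :=
  fun i j => (1 / (M.edges.card : ℝ)) *
    ∑ H : Finset (Fin n) × Finset (Fin n × Fin n),
      if IsStrucInstance M G H ∧ AnchoredPair M A H i j then ∑ e ∈ H.2, G e.1 e.2 else 0

/-!
A functional instance `H` of a motif is the image of the motif under any isomorphism onto `H`;
for the cyclic triangle this is a directed triangle. An instance anchored at `{i, j}` is thus a
triangle `i → k → j → i` or `j → k → i → j` through a third vertex `k`, each determined by `k`,
and the two families are disjoint. Since `G` vanishes off the edge set, `G = J ∘ G`, so the
`k`-th term of `C i j` is `J i k * J k j * J j i * (G i k + G k j + G j i)`: the weight of the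
first triangle if it exists and `0` otherwise. The second family likewise gives `C j i`.
-/

theorem mem_edgeFinset {G : Matrix (Fin n) (Fin n) ℝ} {a b : Fin n} :
    (a, b) ∈ edgeFinset G ↔ a ≠ b ∧ 0 < G a b := by
  simp [edgeFinset]

namespace Motif

def copy (M : Motif m) (φ : Fin m → Fin n) : Finset (Fin n) × Finset (Fin n × Fin n) :=
  (Finset.univ.image φ, M.edges.image (Prod.map φ φ))

theorem isIso_copy (M : Motif m) {φ : Fin m → Fin n} (hφ : Function.Injective φ) :
    IsIso M (M.copy φ) φ := by
  refine ⟨hφ, rfl, fun u v => ?_⟩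
  simp only [copy, Finset.mem_image, Prod.exists, Prod.map_apply, Prod.mk.injEq]
  constructor
  · exact fun h => ⟨u, v, h, rfl, rfl⟩
  · rintro ⟨u', v', h, hu, hv⟩
    rwa [← hφ hu, ← hφ hv]

end Motif

theorem IsIso.eq_copy {M : Motif m} {H : Finset (Fin n) × Finset (Fin n × Fin n)}
    {φ : Fin m → Fin n} (hH : IsGraphPair H) (hφ : IsIso M H φ) : H = M.copy φ := by
  obtain ⟨-, hV, hE⟩ := hφ
  refine Prod.ext hV.symm (Finset.ext fun ⟨x, y⟩ => ⟨fun hxy => ?_, fun hxy => ?_⟩)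
  · obtain ⟨hx, hy, -⟩ := hH _ hxy
    rw [← hV, Finset.mem_image] at hx hy
    obtain ⟨u, -, rfl⟩ := hx
    obtain ⟨v, -, rfl⟩ := hy
    exact Finset.mem_image_of_mem _ ((hE u v).2 hxy)
  · obtain ⟨⟨u, v⟩, huv, he⟩ := Finset.mem_image.1 hxy
    rw [← he]
    exact (hE u v).1 huv

section Triangle

variable {G : Matrix (Fin n) (Fin n) ℝ} {x y z : Fin n}

def triangle (x y z : Fin n) : Finset (Fin n) × Finset (Fin n × Fin n) :=
  ({x, y, z}, {(x, y), (y, z), (z, x)})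

def IsTriangle (G : Matrix (Fin n) (Fin n) ℝ) (x y z : Fin n) : Prop :=
  (x, y) ∈ edgeFinset G ∧ (y, z) ∈ edgeFinset G ∧ (z, x) ∈ edgeFinset G

theorem IsTriangle.ne (h : IsTriangle G x y z) : x ≠ y ∧ y ≠ z ∧ z ≠ x :=
  ⟨(mem_edgeFinset.1 h.1).1, (mem_edgeFinset.1 h.2.1).1, (mem_edgeFinset.1 h.2.2).1⟩

theorem IsTriangle.rotate (h : IsTriangle G x y z) : IsTriangle G y z x :=
  ⟨h.2.1, h.2.2, h.1⟩

theorem triangle_rotate (x y z : Fin n) : triangle x y z = triangle y z x := by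
  simp only [triangle, Prod.mk.injEq]
  constructor <;> ext <;> simp only [Finset.mem_insert, Finset.mem_singleton] <;> tauto

theorem triangle_injective_middle {x y y' z : Fin n} (hxy : x ≠ y) (hyz : y ≠ z)
    (h : triangle x y z = triangle x y' z) : y = y' := by
  have hy : y ∈ (triangle x y' z).1 := by rw [← h]; simp [triangle]
  simp only [triangle, Finset.mem_insert, Finset.mem_singleton] at hy
  rcases hy with rfl | rfl | rfl
  · exact absurd rfl hxy
  · rfl
  · exact absurd rfl hyz

theorem triangle_ne_triangle_swap {x y y' z : Fin n} (hxy : x ≠ y) (hyz : y ≠ z)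
    (hzx : z ≠ x) : triangle x y z ≠ triangle z y' x := by
  intro h
  have hxz : (x, z) ∈ (triangle x y z).2 := by rw [h]; simp [triangle]
  simp only [triangle, Finset.mem_insert, Finset.mem_singleton, Prod.mk.injEq] at hxz
  rcases hxz with ⟨-, rfl⟩ | ⟨rfl, -⟩ | ⟨rfl, -⟩
  · exact hyz rfl
  · exact hxy rfl
  · exact hzx rfl

theorem sum_weight_triangle (hxy : x ≠ y) (hyz : y ≠ z) :
    ∑ e ∈ (triangle x y z).2, G e.1 e.2 = G x y + G y z + G z x := by
  rw [triangle, Finset.sum_insert (by simp [hxy, hxy.symm]),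
    Finset.sum_insert (by simp [hyz]), Finset.sum_singleton, add_assoc]

end Triangle

section CyclicTriangleMotif

variable {G : Matrix (Fin n) (Fin n) ℝ} {M1 : Motif 3} {x y z : Fin n}

theorem copy_eq_triangle (hM : M1.edges = {((0 : Fin 3), 1), (1, 2), (2, 0)})
    (φ : Fin 3 → Fin n) : M1.copy φ = triangle (φ 0) (φ 1) (φ 2) := by
  simp [Motif.copy, hM, triangle, Fin.univ_succ, Finset.image_insert]

theorem isIso_triangle (hM : M1.edges = {((0 : Fin 3), 1), (1, 2), (2, 0)})
    (hxy : x ≠ y) (hyz : y ≠ z) (hzx : z ≠ x) : IsIso M1 (triangle x y z) ![x, y, z] := by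
  have hφ : Function.Injective ![x, y, z] := by
    intro u v
    fin_cases u <;> fin_cases v <;> simp_all [eq_comm]
  simpa [copy_eq_triangle hM] using M1.isIso_copy hφ

theorem isFuncInstance_triangle (hM : M1.edges = {((0 : Fin 3), 1), (1, 2), (2, 0)})
    (h : IsTriangle G x y z) : IsFuncInstance M1 G (triangle x y z) := by
  obtain ⟨hxy, hyz, hzx⟩ := h.ne
  refine ⟨?_, ?_, _, isIso_triangle hM hxy hyz hzx⟩
  · simp only [IsGraphPair, triangle, Finset.mem_insert, Finset.mem_singleton]
    rintro e (rfl | rfl | rfl) <;> simp_all [eq_comm]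
  · simp only [triangle, Finset.insert_subset_iff, Finset.singleton_subset_iff]
    exact h

theorem isFuncInstance_and_anchoredPair_iff
    (hM : M1.edges = {((0 : Fin 3), 1), (1, 2), (2, 0)})
    {H : Finset (Fin n) × Finset (Fin n × Fin n)} {i j : Fin n} :
    IsFuncInstance M1 G H ∧ AnchoredPair M1 Finset.univ H i j ↔
      (∃ k, IsTriangle G i k j ∧ triangle i k j = H) ∨
        (∃ k, IsTriangle G j k i ∧ triangle j k i = H) := by
  constructor
  · rintro ⟨⟨hH, hsub, -⟩, φ, hφ, a, -, b, -, hab, rfl, rfl⟩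
    obtain rfl : H = triangle (φ 0) (φ 1) (φ 2) := (hφ.eq_copy hH).trans (copy_eq_triangle hM φ)
    have ht : IsTriangle G (φ 0) (φ 1) (φ 2) := by
      simp only [triangle, Finset.insert_subset_iff, Finset.singleton_subset_iff] at hsub
      exact hsub
    have hrot := triangle_rotate (φ 0) (φ 1) (φ 2)
    have hrot' := triangle_rotate (φ 1) (φ 2) (φ 0)
    -- up to rotating the triangle, the anchors `(a, b)` are `(0, 2)` or `(2, 0)`
    fin_cases a <;> fin_cases b
    all_goals first
      | exact absurd rfl hab
      | exact Or.inl ⟨_, ht, rfl⟩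
      | exact Or.inr ⟨_, ht, rfl⟩
      | exact Or.inl ⟨_, ht.rotate, hrot.symm⟩
      | exact Or.inr ⟨_, ht.rotate, hrot.symm⟩
      | exact Or.inl ⟨_, ht.rotate.rotate, (hrot.trans hrot').symm⟩
      | exact Or.inr ⟨_, ht.rotate.rotate, (hrot.trans hrot').symm⟩
  · rintro (⟨k, h, rfl⟩ | ⟨k, h, rfl⟩) <;> obtain ⟨hik, hkj, hji⟩ := h.ne <;>
      refine ⟨isFuncInstance_triangle hM h, _, isIso_triangle hM hik hkj hji, ?_⟩
    · exact ⟨0, Finset.mem_univ _, 2, Finset.mem_univ _, by decide, rfl, rfl⟩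
    · exact ⟨2, Finset.mem_univ _, 0, Finset.mem_univ _, by decide, rfl, rfl⟩

theorem sum_funcInstance_anchoredPair (hM : M1.edges = {((0 : Fin 3), 1), (1, 2), (2, 0)})
    (i j : Fin n) :
    (∑ H : Finset (Fin n) × Finset (Fin n × Fin n),
      if IsFuncInstance M1 G H ∧ AnchoredPair M1 Finset.univ H i j then
        ∑ e ∈ H.2, G e.1 e.2 else 0) =
      (∑ k, if IsTriangle G i k j then G i k + G k j + G j i else 0) +
        ∑ k, if IsTriangle G j k i then G j k + G k i + G i j else 0 := by
  have hinj (i j : Fin n) :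
      Set.InjOn (triangle i · j) (Finset.univ.filter (IsTriangle G i · j)) := by
    intro k hk k' _ h
    obtain ⟨hik, hkj, -⟩ := (Finset.mem_filter.1 hk).2.ne
    exact triangle_injective_middle hik hkj h
  have hdisj : Disjoint ((Finset.univ.filter (IsTriangle G i · j)).image (triangle i · j))
      ((Finset.univ.filter (IsTriangle G j · i)).image (triangle j · i)) := by
    simp only [Finset.disjoint_left, Finset.mem_image, Finset.mem_filter, Finset.mem_univ,
      true_and, not_exists, not_and]
    rintro _ ⟨k, hk, rfl⟩ k' - h
    obtain ⟨hik, hkj, hji⟩ := hk.ne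
    exact triangle_ne_triangle_swap hik hkj hji h.symm
  have hset : Finset.univ.filter (fun H => IsFuncInstance M1 G H ∧
      AnchoredPair M1 Finset.univ H i j) =
      (Finset.univ.filter (IsTriangle G i · j)).image (triangle i · j) ∪
        (Finset.univ.filter (IsTriangle G j · i)).image (triangle j · i) := by
    ext H
    simp [isFuncInstance_and_anchoredPair_iff hM]
  rw [← Finset.sum_filter, hset, Finset.sum_union hdisj, Finset.sum_image (hinj i j),
    Finset.sum_image (hinj j i), ← Finset.sum_filter, ← Finset.sum_filter]
  congr 1 <;> refine Finset.sum_congr rfl fun k hk => ?_ <;>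
    obtain ⟨hxy, hyz, -⟩ := (Finset.mem_filter.1 hk).2.ne <;> exact sum_weight_triangle hxy hyz

end CyclicTriangleMotif

section TriangleMatrix

variable {G : Matrix (Fin n) (Fin n) ℝ}

/-- The matrix `C` of the statement. -/
def triangleMatrix (G : Matrix (Fin n) (Fin n) ℝ) : Matrix (Fin n) (Fin n) ℝ :=
  had (Jmat G)ᵀ (Jmat G * G) + had (Jmat G)ᵀ (G * Jmat G) + had Gᵀ (Jmat G * Jmat G)

theorem Jmat_mul_apply_self (hpos : ∀ i j, 0 ≤ G i j) (hdiag : ∀ i, G i i = 0) (a b : Fin n) :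
    Jmat G a b * G a b = G a b := by
  by_cases hab : (a, b) ∈ edgeFinset G
  · simp [Jmat, hab]
  · rw [mem_edgeFinset, not_and_or, not_ne_iff, not_lt] at hab
    rcases hab with rfl | hab
    · simp [hdiag]
    · simp [le_antisymm hab (hpos a b)]

theorem Jmat_mul_Jmat_mul_Jmat (x y z : Fin n) :
    Jmat G x y * Jmat G y z * Jmat G z x = if IsTriangle G x y z then 1 else 0 := by
  simp only [Jmat, IsTriangle]
  split_ifs <;> simp_all

theorem triangleMatrix_apply (hpos : ∀ i j, 0 ≤ G i j) (hdiag : ∀ i, G i i = 0) (i j : Fin n) :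
    triangleMatrix G i j = ∑ k, if IsTriangle G i k j then G i k + G k j + G j i else 0 := by
  simp only [triangleMatrix, had, Matrix.add_apply, Matrix.transpose_apply, Matrix.mul_apply,
    Finset.mul_sum, ← Finset.sum_add_distrib]
  refine Finset.sum_congr rfl fun k _ => ?_
  have hJ := Jmat_mul_apply_self hpos hdiag
  rw [← one_mul (G i k + G k j + G j i), ← ite_zero_mul, ← Jmat_mul_Jmat_mul_Jmat]
  linear_combination (-(Jmat G j i * Jmat G i k)) * hJ k j -
    (Jmat G j i * Jmat G k j) * hJ i k - (Jmat G i k * Jmat G k j) * hJ j i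

end TriangleMatrix

/-- **Functional MAM formula for the cyclic triangle motif `M₁`.** -/
theorem mam_M1_func
    (G : Matrix (Fin n) (Fin n) ℝ)
    (hpos : ∀ i j, 0 ≤ G i j) (hdiag : ∀ i, G i i = 0)
    (M1 : Motif 3) (hM : M1.edges = {((0 : Fin 3), 1), (1, 2), (2, 0)}) :
    mamFunc M1 Finset.univ G =
      (1 / 3 : ℝ) •
        (had (Jmat G)ᵀ (Jmat G * G) + had (Jmat G)ᵀ (G * Jmat G) + had Gᵀ (Jmat G * Jmat G) +
          (had (Jmat G)ᵀ (Jmat G * G) + had (Jmat G)ᵀ (G * Jmat G) +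
            had Gᵀ (Jmat G * Jmat G))ᵀ) := by
  change _ = (1 / 3 : ℝ) • (triangleMatrix G + (triangleMatrix G)ᵀ)
  have hcard : M1.edges.card = 3 := by rw [hM]; decide
  ext i j
  rw [mamFunc, sum_funcInstance_anchoredPair hM, hcard, Matrix.smul_apply, Matrix.add_apply,
    Matrix.transpose_apply, triangleMatrix_apply hpos hdiag, triangleMatrix_apply hpos hdiag,
    smul_eq_mul, Nat.cast_ofNat]
end
end

section
/- Let G be a weighted directed graph on vertex set V = {1,…,n} and let M_13 be the simple bi-directional 2-star motif with vertices {1,2,3} and edge set E_M = {(1,2),(2,1),(2,3),(3,2)}. Then the functional motif adjacency matrix of M_13 in G satisfies M^func = (1/4)·(C + Cᵀ), where C = J_d ∘ (G_d J_n) + G_d ∘ (J_d J_n) + J_n ∘ (J_d G_d). -/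
/-!
A functional instance of `M₁₃` is a bi-directional star `x ⇄ y ⇄ z` on three distinct vertices,
and it is the image of exactly `|Aut M₁₃| = 2` embeddings `![x, y, z]` of the motif (the two leaves
may be swapped). Summing over embeddings, i.e. over triples, therefore counts every instance twice.
Since the motif is simple, `{i, j}` is anchored exactly when `i ≠ j` are both vertices of the
instance; pinning `i` and `j` to two of the three positions leaves a sum over the remaining vertex
`k`, and the six resulting terms pair up under the leaf swap into `2 (C + Cᵀ)ᵢⱼ`.
-/

open scoped Classical BigOperators Matrix

noncomputable section

variable {n m : ℕ}

open Finset

namespace Motif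

def aut (M : Motif m) : Finset (Fin m → Fin m) :=
  univ.filter (IsIso M (univ, M.edges))

def imageGraph (M : Motif m) (φ : Fin m → Fin n) : Finset (Fin n) × Finset (Fin n × Fin n) :=
  (univ.image φ, M.edges.image (Prod.map φ φ))

def IsEmbedding (M : Motif m) (G : Matrix (Fin n) (Fin n) ℝ) (φ : Fin m → Fin n) : Prop :=
  Function.Injective φ ∧ ∀ e ∈ M.edges, (φ e.1, φ e.2) ∈ edgeFinset G

end Motif

section Isomorphisms

variable {M : Motif m} {H : Finset (Fin n) × Finset (Fin n × Fin n)} {φ ψ : Fin m → Fin n}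

theorem Motif.isIso_self_iff {σ : Fin m → Fin m} :
    IsIso M (univ, M.edges) σ ↔
      Function.Injective σ ∧ ∀ u v, (u, v) ∈ M.edges ↔ (σ u, σ v) ∈ M.edges :=
  ⟨fun h => ⟨h.1, h.2.2⟩, fun h =>
    ⟨h.1, image_univ_of_surjective (Finite.injective_iff_surjective.mp h.1), h.2⟩⟩

theorem IsIso.comp_aut (hφ : IsIso M H φ) {σ : Fin m → Fin m} (hσ : σ ∈ M.aut) :
    IsIso M H (φ ∘ σ) := by
  obtain ⟨hσinj, hσim, hσe⟩ := (mem_filter.mp hσ).2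
  refine ⟨hφ.1.comp hσinj, ?_, fun u v => (hσe u v).trans (hφ.2.2 (σ u) (σ v))⟩
  rw [← image_image, hσim, hφ.2.1]

theorem IsIso.exists_aut (hφ : IsIso M H φ) (hψ : IsIso M H ψ) :
    ∃ σ ∈ M.aut, ψ = φ ∘ σ := by
  have hmem : ∀ u, ∃ v, φ v = ψ u := fun u => by
    have : ψ u ∈ univ.image φ := by rw [hφ.2.1, ← hψ.2.1]; exact mem_image_of_mem ψ (mem_univ u)
    simpa using this
  choose σ hσ using hmem
  have hψσ : ψ = φ ∘ σ := funext fun u => (hσ u).symm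
  refine ⟨σ, mem_filter.mpr ⟨mem_univ _, Motif.isIso_self_iff.mpr ⟨?_, fun u v => ?_⟩⟩, hψσ⟩
  · exact fun u v huv => hψ.1 (by rw [← hσ u, ← hσ v, huv])
  · rw [hψ.2.2, hφ.2.2, hσ, hσ]

theorem card_filter_isIso (hφ : IsIso M H φ) :
    (univ.filter (IsIso M H)).card = M.aut.card := by
  have himage : univ.filter (IsIso M H) = M.aut.image (φ ∘ ·) := by
    ext ψ
    simp only [mem_filter, mem_univ, true_and, mem_image]
    exact ⟨fun hψ => (hφ.exists_aut hψ).imp fun σ h => ⟨h.1, h.2.symm⟩,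
      fun ⟨σ, hσ, h⟩ => h ▸ hφ.comp_aut hσ⟩
  rw [himage, card_image_of_injective _ hφ.1.comp_left]

end Isomorphisms

theorem ne_of_mem_edgeFinset {G : Matrix (Fin n) (Fin n) ℝ} {i j : Fin n}
    (h : (i, j) ∈ edgeFinset G) : i ≠ j :=
  (mem_filter.mp h).2.1

theorem Jdmat_apply_comm (G : Matrix (Fin n) (Fin n) ℝ) (i j : Fin n) :
    Jdmat G i j = Jdmat G j i := by
  simp only [Jdmat, and_comm]

theorem Gdmat_apply_comm (G : Matrix (Fin n) (Fin n) ℝ) (i j : Fin n) :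
    Gdmat G i j = Gdmat G j i := by
  simp only [Gdmat, and_comm, add_comm]

theorem Jnmat_apply_comm (i j : Fin n) : Jnmat n i j = Jnmat n j i := by
  simp only [Jnmat, ne_comm]

theorem injective_vec_three_iff {α : Type*} {x y z : α} :
    Function.Injective ![x, y, z] ↔ x ≠ y ∧ y ≠ z ∧ x ≠ z := by
  refine ⟨fun h => ⟨fun e => ?_, fun e => ?_, fun e => ?_⟩, fun ⟨hxy, hyz, hxz⟩ a b hab => ?_⟩
  · exact absurd (@h 0 1 e) (by decide)
  · exact absurd (@h 1 2 e) (by decide)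
  · exact absurd (@h 0 2 e) (by decide)
  · fin_cases a <;> fin_cases b <;> simp_all [eq_comm]

section Instances

variable {M : Motif m} {G : Matrix (Fin n) (Fin n) ℝ}
  {H : Finset (Fin n) × Finset (Fin n × Fin n)} {φ : Fin m → Fin n}

theorem isFuncInstance_and_isIso_iff :
    IsFuncInstance M G H ∧ IsIso M H φ ↔ M.IsEmbedding G φ ∧ H = M.imageGraph φ := by
  constructor
  · rintro ⟨⟨hpair, hsub, -⟩, hinj, himage, hedge⟩
    refine ⟨⟨hinj, fun e he => hsub ((hedge e.1 e.2).mp he)⟩, Prod.ext himage.symm ?_⟩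
    ext ⟨x, y⟩
    refine ⟨fun he => ?_, ?_⟩
    · obtain ⟨hx, hy, -⟩ := hpair _ he
      rw [← himage] at hx hy
      obtain ⟨u, -, rfl⟩ := mem_image.mp hx
      obtain ⟨v, -, rfl⟩ := mem_image.mp hy
      exact mem_image_of_mem _ ((hedge u v).mpr he)
    · simp only [Motif.imageGraph, mem_image, Prod.map, Prod.mk.injEq]
      rintro ⟨⟨u, v⟩, huv, rfl, rfl⟩
      exact (hedge u v).mp huv
  · rintro ⟨⟨hinj, hedge⟩, rfl⟩
    have hmap : Function.Injective (Prod.map φ φ) := hinj.prodMap hinj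
    have hiso : IsIso M (M.imageGraph φ) φ :=
      ⟨hinj, rfl, fun u v => (hmap.mem_finset_image (a := (u, v))).symm⟩
    refine ⟨⟨?_, ?_, φ, hiso⟩, hiso⟩
    · rintro _ he'
      obtain ⟨e, he, rfl⟩ := mem_image.mp he'
      exact ⟨mem_image_of_mem φ (mem_univ _), mem_image_of_mem φ (mem_univ _),
        hinj.ne (M.irrefl e he)⟩
    · simp only [Motif.imageGraph, image_subset_iff]
      exact hedge

theorem sum_imageGraph_edges (hφ : Function.Injective φ) :
    ∑ e ∈ (M.imageGraph φ).2, G e.1 e.2 = ∑ e ∈ M.edges, G (φ e.1) (φ e.2) :=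
  sum_image fun _ _ _ _ h => (hφ.prodMap hφ) h

theorem anchoredPair_univ_iff (hφ : IsIso M H φ) (i j : Fin n) :
    AnchoredPair M univ H i j ↔ i ∈ H.1 ∧ j ∈ H.1 ∧ i ≠ j := by
  constructor
  · rintro ⟨ψ, ⟨hinj, himage, -⟩, a, -, b, -, hab, rfl, rfl⟩
    rw [← himage]
    exact ⟨mem_image_of_mem ψ (mem_univ a), mem_image_of_mem ψ (mem_univ b), hinj.ne hab⟩
  · rintro ⟨hi, hj, hij⟩
    rw [← hφ.2.1] at hi hj
    obtain ⟨a, -, rfl⟩ := mem_image.mp hi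
    obtain ⟨b, -, rfl⟩ := mem_image.mp hj
    exact ⟨φ, hφ, a, mem_univ a, b, mem_univ b, ne_of_apply_ne φ hij, rfl, rfl⟩

/-- Double counting: every functional instance is the image of exactly `|Aut M|` embeddings. -/
theorem card_aut_smul_sum_funcInstances {β : Type*} [AddCommMonoid β]
    (P : Finset (Fin n) × Finset (Fin n × Fin n) → Prop)
    (w : Finset (Fin n) × Finset (Fin n × Fin n) → β) :
    M.aut.card • ∑ H, (if IsFuncInstance M G H ∧ P H then w H else 0) =
      ∑ φ, if M.IsEmbedding G φ ∧ P (M.imageGraph φ) then w (M.imageGraph φ) else 0 := by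
  calc M.aut.card • ∑ H, (if IsFuncInstance M G H ∧ P H then w H else 0)
      = ∑ H, ∑ φ, if (IsFuncInstance M G H ∧ IsIso M H φ) ∧ P H then w H else 0 := by
        rw [smul_sum]
        refine sum_congr rfl fun H _ => ?_
        by_cases hH : IsFuncInstance M G H
        · obtain ⟨φ, hφ⟩ := hH.2.2
          by_cases hP : P H
          · simp only [hH, hP, true_and, and_true, if_true]
            rw [← sum_filter, sum_const, card_filter_isIso hφ]
          · simp only [hP, and_false, if_false, sum_const_zero, smul_zero]
        · simp [hH]
    _ = ∑ φ, ∑ H, if (IsFuncInstance M G H ∧ IsIso M H φ) ∧ P H then w H else 0 := sum_comm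
    _ = _ := by
        refine sum_congr rfl fun φ _ => ?_
        simp only [isFuncInstance_and_isIso_iff]
        by_cases hφ : M.IsEmbedding G φ <;> simp [hφ, ite_and]

end Instances

theorem ite_mem_image_and_ne_eq_sum {α β γ : Type*} [Fintype α] [DecidableEq α] [DecidableEq β]
    [AddCommMonoid γ] {φ : α → β} (hφ : Function.Injective φ) (i j : β) (c : γ) :
    (if i ∈ univ.image φ ∧ j ∈ univ.image φ ∧ i ≠ j then c else 0) =
      ∑ a, ∑ b, if a ≠ b ∧ φ a = i ∧ φ b = j then c else 0 := by
  by_cases h : i ∈ univ.image φ ∧ j ∈ univ.image φ ∧ i ≠ j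
  · obtain ⟨hi, hj, hij⟩ := h
    obtain ⟨a, -, rfl⟩ := mem_image.mp hi
    obtain ⟨b, -, rfl⟩ := mem_image.mp hj
    have hpins : ∀ a' b', a' ≠ b' ∧ φ a' = φ a ∧ φ b' = φ b ↔ a' = a ∧ b' = b := fun a' b' =>
      ⟨fun h => ⟨hφ h.2.1, hφ h.2.2⟩, by rintro ⟨rfl, rfl⟩; exact ⟨ne_of_apply_ne φ hij, rfl, rfl⟩⟩
    simp [hpins, hij, ite_and]
  · rw [if_neg h]
    refine (sum_eq_zero fun a _ => sum_eq_zero fun b _ => if_neg ?_).symm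
    rintro ⟨hab, rfl, rfl⟩
    exact h ⟨mem_image_of_mem φ (mem_univ a), mem_image_of_mem φ (mem_univ b), hφ.ne hab⟩

theorem ite_isEmbedding_and_anchoredPair_eq_sum (M : Motif m) (G : Matrix (Fin n) (Fin n) ℝ)
    (i j : Fin n) (φ : Fin m → Fin n) :
    (if M.IsEmbedding G φ ∧ AnchoredPair M univ (M.imageGraph φ) i j then
        ∑ e ∈ (M.imageGraph φ).2, G e.1 e.2 else 0) =
      ∑ a, ∑ b, if a ≠ b ∧ φ a = i ∧ φ b = j then
        (if M.IsEmbedding G φ then ∑ e ∈ M.edges, G (φ e.1) (φ e.2) else 0) else 0 := by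
  by_cases hφ : M.IsEmbedding G φ
  · have hiso := (isFuncInstance_and_isIso_iff.mpr ⟨hφ, rfl⟩).2
    rw [anchoredPair_univ_iff hiso, sum_imageGraph_edges hφ.1]
    simp only [hφ, true_and, if_true]
    exact ite_mem_image_and_ne_eq_sum hφ.1 i j _
  · simp [hφ]

theorem sum_fin_succ_fun {α β : Type*} [Fintype α] [AddCommMonoid β] (k : ℕ)
    (g : (Fin (k + 1) → α) → β) :
    ∑ f, g f = ∑ x, ∑ f : Fin k → α, g (Fin.cons x f) := by
  rw [← Fintype.sum_prod_type']
  exact (Fintype.sum_equiv (Fin.consEquiv fun _ => α) _ _ fun _ => rfl).symm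

theorem sum_fin_three_fun {α β : Type*} [Fintype α] [AddCommMonoid β] (g : (Fin 3 → α) → β) :
    ∑ f, g f = ∑ x, ∑ y, ∑ z, g ![x, y, z] := by
  simp only [sum_fin_succ_fun, Fintype.sum_unique]
  rfl

theorem sum_triples_sum_pinned_eq {α β : Type*} [Fintype α] [DecidableEq α] [AddCommMonoid β]
    (f : α → α → α → β) (i j : α) :
    ∑ x, ∑ y, ∑ z, ∑ a : Fin 3, ∑ b : Fin 3,
        (if a ≠ b ∧ ![x, y, z] a = i ∧ ![x, y, z] b = j then f x y z else 0) =
      ∑ k, (f i j k + f i k j + f j i k + f k i j + f j k i + f k j i) := by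
  have hpinned : ∀ x y z : α, ∑ a : Fin 3, ∑ b : Fin 3,
      (if a ≠ b ∧ ![x, y, z] a = i ∧ ![x, y, z] b = j then f x y z else 0) =
        (if x = i ∧ y = j then f x y z else 0) + (if x = i ∧ z = j then f x y z else 0) +
        (if y = i ∧ x = j then f x y z else 0) + (if y = i ∧ z = j then f x y z else 0) +
        (if z = i ∧ x = j then f x y z else 0) + (if z = i ∧ y = j then f x y z else 0) := by
    intro x y z
    simp only [Fin.sum_univ_three, Matrix.cons_val_zero, Matrix.cons_val_one, Matrix.cons_val_two,
      Matrix.tail_cons, Matrix.head_cons, ne_eq, not_true_eq_false, false_and, if_false, zero_add,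
      add_zero, Fin.reduceEq, not_false_eq_true, true_and]
    abel
  simp only [hpinned]
  simp only [sum_add_distrib, ite_and, sum_ite_irrel, sum_const_zero, sum_ite_eq',
    mem_univ, if_true]

/-- The weight `Gd x y + Gd y z` of the bi-directional star `x ⇄ y ⇄ z` centred at `y`, or `0`
if that star is not present in `G`. -/
def biStarWeight (G : Matrix (Fin n) (Fin n) ℝ) (x y z : Fin n) : ℝ :=
  Jnmat n x z * (Gdmat G x y * Jdmat G y z + Jdmat G x y * Gdmat G y z)

def biStarMatrix (G : Matrix (Fin n) (Fin n) ℝ) : Matrix (Fin n) (Fin n) ℝ :=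
  had (Jdmat G) (Gdmat G * Jnmat n) + had (Gdmat G) (Jdmat G * Jnmat n) +
    had (Jnmat n) (Jdmat G * Gdmat G)

theorem biStarWeight_comm (G : Matrix (Fin n) (Fin n) ℝ) (x y z : Fin n) :
    biStarWeight G x y z = biStarWeight G z y x := by
  simp only [biStarWeight, Jnmat_apply_comm x z, Gdmat_apply_comm G x y, Jdmat_apply_comm G x y,
    Gdmat_apply_comm G y z, Jdmat_apply_comm G y z]
  ring

theorem sum_biStarWeight_eq (G : Matrix (Fin n) (Fin n) ℝ) (i j : Fin n) :
    ∑ k, (biStarWeight G i j k + biStarWeight G i k j + biStarWeight G j i k +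
        biStarWeight G k i j + biStarWeight G j k i + biStarWeight G k j i) =
      2 * (biStarMatrix G + (biStarMatrix G)ᵀ) i j := by
  simp only [biStarMatrix, had, Matrix.add_apply, Matrix.transpose_apply, Matrix.mul_apply,
    mul_sum, ← sum_add_distrib]
  refine sum_congr rfl fun k _ => ?_
  rw [biStarWeight_comm G k i j, biStarWeight_comm G k j i, biStarWeight_comm G j k i]
  simp only [biStarWeight, Jnmat_apply_comm j i, Jnmat_apply_comm k i, Jnmat_apply_comm k j,
    Gdmat_apply_comm G j i, Gdmat_apply_comm G k i, Gdmat_apply_comm G k j,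
    Jdmat_apply_comm G j i, Jdmat_apply_comm G k j]
  ring

section BiStar

variable {M : Motif 3} {G : Matrix (Fin n) (Fin n) ℝ}

theorem card_aut_eq_two (hM : M.edges = {((0 : Fin 3), 1), (1, 0), (1, 2), (2, 1)}) :
    M.aut.card = 2 := by
  have haut : M.aut = univ.filter fun σ : Fin 3 → Fin 3 =>
      Function.Injective σ ∧ ∀ u v, (u, v) ∈ M.edges ↔ (σ u, σ v) ∈ M.edges :=
    filter_congr fun σ _ => Motif.isIso_self_iff
  rw [haut, hM]
  decide

theorem isEmbedding_vec_three_iff (hM : M.edges = {((0 : Fin 3), 1), (1, 0), (1, 2), (2, 1)})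
    (x y z : Fin n) :
    M.IsEmbedding G ![x, y, z] ↔
      ((x, y) ∈ edgeFinset G ∧ (y, x) ∈ edgeFinset G) ∧
        ((y, z) ∈ edgeFinset G ∧ (z, y) ∈ edgeFinset G) ∧ x ≠ z := by
  simp only [Motif.IsEmbedding, hM, forall_mem_insert, mem_singleton, forall_eq,
    injective_vec_three_iff, Matrix.cons_val_zero, Matrix.cons_val_one, Matrix.cons_val_two,
    Matrix.tail_cons, Matrix.head_cons]
  constructor
  · rintro ⟨⟨-, -, hxz⟩, hxy, hyx, hyz, hzy⟩
    exact ⟨⟨hxy, hyx⟩, ⟨hyz, hzy⟩, hxz⟩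
  · rintro ⟨⟨hxy, hyx⟩, ⟨hyz, hzy⟩, hxz⟩
    exact ⟨⟨ne_of_mem_edgeFinset hxy, ne_of_mem_edgeFinset hyz, hxz⟩, hxy, hyx, hyz, hzy⟩

theorem ite_isEmbedding_vec_three_eq
    (hM : M.edges = {((0 : Fin 3), 1), (1, 0), (1, 2), (2, 1)}) (x y z : Fin n) :
    (if M.IsEmbedding G ![x, y, z] then
        ∑ e ∈ M.edges, G (![x, y, z] e.1) (![x, y, z] e.2) else 0) = biStarWeight G x y z := by
  rw [isEmbedding_vec_three_iff hM, hM, sum_insert (by decide), sum_insert (by decide),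
    sum_insert (by decide), sum_singleton]
  simp only [Matrix.cons_val_zero, Matrix.cons_val_one, Matrix.cons_val_two, Matrix.tail_cons,
    Matrix.head_cons]
  by_cases hxy : (x, y) ∈ edgeFinset G ∧ (y, x) ∈ edgeFinset G <;>
    by_cases hyz : (y, z) ∈ edgeFinset G ∧ (z, y) ∈ edgeFinset G <;>
    by_cases hxz : x = z <;>
    simp [biStarWeight, Jdmat, Gdmat, Jnmat, hxy, hyz, hxz]
  ring

theorem sum_funcInstances_biStar
    (hM : M.edges = {((0 : Fin 3), 1), (1, 0), (1, 2), (2, 1)}) (G : Matrix (Fin n) (Fin n) ℝ)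
    (i j : Fin n) :
    ∑ H, (if IsFuncInstance M G H ∧ AnchoredPair M univ H i j then ∑ e ∈ H.2, G e.1 e.2 else 0) =
      (biStarMatrix G + (biStarMatrix G)ᵀ) i j := by
  have hcount := card_aut_smul_sum_funcInstances (M := M) (G := G) (AnchoredPair M univ · i j)
    fun H => ∑ e ∈ H.2, G e.1 e.2
  have hembeddings : ∑ φ, (if M.IsEmbedding G φ ∧ AnchoredPair M univ (M.imageGraph φ) i j then
        ∑ e ∈ (M.imageGraph φ).2, G e.1 e.2 else 0) =
      2 * (biStarMatrix G + (biStarMatrix G)ᵀ) i j := by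
    simp only [ite_isEmbedding_and_anchoredPair_eq_sum]
    rw [sum_fin_three_fun, sum_triples_sum_pinned_eq]
    simp only [ite_isEmbedding_vec_three_eq hM]
    exact sum_biStarWeight_eq G i j
  rw [card_aut_eq_two hM, nsmul_eq_mul, Nat.cast_ofNat, hembeddings] at hcount
  linarith

end BiStar

theorem mam_M13_func_general
    (G : Matrix (Fin n) (Fin n) ℝ)
    (M13 : Motif 3) (hM : M13.edges = {((0 : Fin 3), 1), (1, 0), (1, 2), (2, 1)}) :
    mamFunc M13 Finset.univ G =
      (1 / 4 : ℝ) •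
        (had (Jdmat G) (Gdmat G * Jnmat n) + had (Gdmat G) (Jdmat G * Jnmat n) +
          had (Jnmat n) (Jdmat G * Gdmat G) +
          (had (Jdmat G) (Gdmat G * Jnmat n) + had (Gdmat G) (Jdmat G * Jnmat n) +
            had (Jnmat n) (Jdmat G * Gdmat G))ᵀ) := by
  have hcard : M13.edges.card = 4 := by rw [hM]; rfl
  funext i j
  rw [mamFunc, hcard, sum_funcInstances_biStar hM]
  simp [biStarMatrix]

/-- **Functional MAM formula for the bi-directional 2-star motif `M₁₃`.** -/
theorem mam_M13_func
    (G : Matrix (Fin n) (Fin n) ℝ)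
    (hpos : ∀ i j, 0 ≤ G i j) (hdiag : ∀ i, G i i = 0)
    (M13 : Motif 3) (hM : M13.edges = {((0 : Fin 3), 1), (1, 0), (1, 2), (2, 1)}) :
    mamFunc M13 Finset.univ G =
      (1 / 4 : ℝ) •
        (had (Jdmat G) (Gdmat G * Jnmat n) + had (Gdmat G) (Jdmat G * Jnmat n) +
          had (Jnmat n) (Jdmat G * Gdmat G) +
          (had (Jdmat G) (Gdmat G * Jnmat n) + had (Gdmat G) (Jdmat G * Jnmat n) +
            had (Jnmat n) (Jdmat G * Gdmat G))ᵀ) :=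
  mam_M13_func_general G M13 hM
end
end
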